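/- For all fixed reals 0 < τ ≤ t, lim_{n→∞} (1/α(n)) · (1/2) Σ_{k≥1} ( e^{−p_k n (2t − τ)} − e^{−p_k n (2t + τ)} ) = Γ(1 − θ) ( (2t + τ)^θ − (2t − τ)^θ ) / 2, and lim_{n→∞} (1/α(n)) · (1/2) Σ_{k≥1} ( e^{−p_k n t} − e^{−p_k n (t + 2τ)} ) = Γ(1 − θ) ( (t + 2τ)^θ − t^θ ) / 2, where Γ is the Gamma function. -/

import Mathlib

open Filter Topology Real MeasureTheory Set

/-!
Write `α = countingFn p` and `Φ(s) = ∑ₖ (1 - e^{-p_k s})`. The layer-cake formula for counting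
measure on `ℕ` gives `Φ(s) = ∫₀^∞ e^{-u} α(s/u) du`. Since `α` is regularly varying of index
`θ`, `α(s/u)/α(s) → u^{-θ}`, and for `θ < γ < 1` Potter's bound
`α(s/u)/α(s) ≤ 2^γ u^{-γ} + 1` (eventually in `s`, obtained by iterating the doubling bound
`α(2x) ≤ 2^γ α(x)`) dominates, so `Φ(s)/α(s) → ∫₀^∞ e^{-u} u^{-θ} du = Γ(1-θ)`. Both sums in
the statement are `(Φ(bn) - Φ(an))/2`, and `Φ(cn)/α(n) → Γ(1-θ) c^θ` because
`α(cn)/α(n) → c^θ`.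
-/

def IsRegularlyVarying (f : ℝ → ℝ) (θ : ℝ) : Prop :=
  ∀ c > (0 : ℝ), Tendsto (fun x => f (c * x) / f x) atTop (𝓝 (c ^ θ))

namespace IsRegularlyVarying

variable {f : ℝ → ℝ} {θ : ℝ}

theorem of_eq_rpow_mul {L : ℝ → ℝ}
    (hL : ∀ c > (0 : ℝ), Tendsto (fun x => L (c * x) / L x) atTop (𝓝 1))
    (hf : ∀ x > (0 : ℝ), f x = x ^ θ * L x) : IsRegularlyVarying f θ := by
  intro c hc
  have hlim := (hL c hc).const_mul (c ^ θ)
  rw [mul_one] at hlim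
  refine hlim.congr' ?_
  filter_upwards [eventually_gt_atTop 0] with x hx
  rw [hf x hx, hf (c * x) (by positivity), mul_rpow hc.le hx.le, mul_assoc, mul_div_assoc,
    mul_div_mul_left _ _ (rpow_pos_of_pos hx θ).ne']

theorem eventually_ne_zero (hf : IsRegularlyVarying f θ) : ∀ᶠ x in atTop, f x ≠ 0 := by
  have h := (hf 1 one_pos).eventually_ne (by rw [one_rpow]; exact one_ne_zero)
  filter_upwards [h] with x hx h0
  simp [h0] at hx

theorem eventually_pos (hf : IsRegularlyVarying f θ) (hf₀ : 0 ≤ f) :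
    ∀ᶠ x in atTop, 0 < f x :=
  hf.eventually_ne_zero.mono fun x hx => (hf₀ x).lt_of_ne' hx

theorem tendsto_comp_mul_div {g : ℝ → ℝ} {A c : ℝ} (hf : IsRegularlyVarying f θ)
    (hg : Tendsto (fun s => g s / f s) atTop (𝓝 A)) (hc : 0 < c) :
    Tendsto (fun s => g (c * s) / f s) atTop (𝓝 (A * c ^ θ)) := by
  have hcs : Tendsto (fun s : ℝ => c * s) atTop atTop := tendsto_id.const_mul_atTop hc
  refine ((hg.comp hcs).mul (hf c hc)).congr' ?_
  filter_upwards [hcs.eventually hf.eventually_ne_zero] with s hs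
  simp only [Function.comp_apply]
  rw [div_mul_div_cancel₀ hs]

theorem eventually_le_two_rpow_mul (hf : IsRegularlyVarying f θ) (hf₀ : 0 ≤ f) {γ : ℝ}
    (hθγ : θ < γ) : ∀ᶠ x in atTop, f (2 * x) ≤ 2 ^ γ * f x := by
  have hlt : (2 : ℝ) ^ θ < 2 ^ γ := rpow_lt_rpow_of_exponent_lt one_lt_two hθγ
  filter_upwards [(hf 2 two_pos).eventually_lt_const hlt, hf.eventually_pos hf₀]
    with x hx hpos
  exact (div_le_iff₀ hpos).1 hx.le

end IsRegularlyVarying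

theorem le_pow_mul_of_doubling {f : ℝ → ℝ} {K s₀ : ℝ} (hK : 0 ≤ K) (hs₀ : 0 ≤ s₀)
    (hdouble : ∀ x ≥ s₀, f (2 * x) ≤ K * f x) {s : ℝ} (hs : s₀ ≤ s) :
    ∀ k : ℕ, f (2 ^ k * s) ≤ K ^ k * f s
  | 0 => by simp
  | k + 1 => by
    have hk : s₀ ≤ 2 ^ k * s :=
      hs.trans (le_mul_of_one_le_left (hs₀.trans hs) (one_le_pow₀ one_le_two))
    calc f (2 ^ (k + 1) * s) = f (2 * (2 ^ k * s)) := by ring_nf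
      _ ≤ K * f (2 ^ k * s) := hdouble _ hk
      _ ≤ K * (K ^ k * f s) :=
        mul_le_mul_of_nonneg_left (le_pow_mul_of_doubling hK hs₀ hdouble hs k) hK
      _ = K ^ (k + 1) * f s := by ring

theorem Monotone.eventually_le_rpow_mul {f : ℝ → ℝ} (hf : Monotone f) (hf₀ : 0 ≤ f) {γ : ℝ}
    (hγ : 0 ≤ γ) (hdouble : ∀ᶠ x in atTop, f (2 * x) ≤ 2 ^ γ * f x) :
    ∀ᶠ s in atTop, ∀ u ∈ Ioc (0 : ℝ) 1, f (s / u) ≤ 2 ^ γ * u ^ (-γ) * f s := by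
  obtain ⟨s₀, hs₀⟩ := eventually_atTop.1 hdouble
  filter_upwards [eventually_ge_atTop (max s₀ 0)] with s hs u ⟨hu₀, hu₁⟩
  have hs₀s : s₀ ≤ s := (le_max_left _ _).trans hs
  have hs0 : 0 ≤ s := (le_max_right _ _).trans hs
  obtain ⟨n, hn, hn'⟩ := exists_nat_pow_near (one_le_one_div hu₀ hu₁) one_lt_two
  have hpow : ((2 : ℝ) ^ γ) ^ (n + 1) ≤ 2 ^ γ * u ^ (-γ) := by
    rw [← rpow_natCast, ← rpow_mul zero_le_two, mul_comm, rpow_mul zero_le_two, rpow_natCast,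
      rpow_neg hu₀.le, ← div_eq_mul_inv, ← div_rpow zero_le_two hu₀.le]
    refine rpow_le_rpow (by positivity) ?_ hγ
    rw [pow_succ, le_div_iff₀ hu₀]
    rw [le_div_iff₀ hu₀] at hn
    nlinarith
  calc f (s / u) ≤ f (2 ^ (n + 1) * s) := by
        refine hf ?_
        rw [div_eq_mul_inv, mul_comm, inv_eq_one_div]
        exact mul_le_mul_of_nonneg_right hn'.le hs0
    _ ≤ ((2 : ℝ) ^ γ) ^ (n + 1) * f s :=
        le_pow_mul_of_doubling (by positivity) (le_max_right s₀ 0)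
          (fun x hx => hs₀ x ((le_max_left _ _).trans hx)) hs (n + 1)
    _ ≤ 2 ^ γ * u ^ (-γ) * f s := mul_le_mul_of_nonneg_right hpow (hf₀ s)

namespace IsRegularlyVarying

variable {f : ℝ → ℝ} {θ : ℝ}

theorem eventually_potter_bound (hf : IsRegularlyVarying f θ) (hf_mono : Monotone f)
    (hf₀ : 0 ≤ f) {γ : ℝ} (hθγ : θ < γ) (hγ : 0 ≤ γ) :
    ∀ᶠ s in atTop, ∀ u > (0 : ℝ), f (s / u) / f s ≤ 2 ^ γ * u ^ (-γ) + 1 := by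
  have hdouble := hf.eventually_le_two_rpow_mul hf₀ hθγ
  filter_upwards [hf_mono.eventually_le_rpow_mul hf₀ hγ hdouble, hf.eventually_pos hf₀,
    eventually_ge_atTop 0] with s hsmall hpos hs u hu
  rw [div_le_iff₀ hpos]
  rcases le_or_gt u 1 with hu1 | hu1
  · nlinarith [hsmall u ⟨hu, hu1⟩]
  · have : 0 ≤ 2 ^ γ * u ^ (-γ) * f s := by positivity
    linarith [hf_mono (div_le_self hs hu1.le)]

theorem tendsto_integral_exp_neg_mul_div (hf : IsRegularlyVarying f θ) (hf_mono : Monotone f)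
    (hf₀ : 0 ≤ f) (hθ : θ < 1) :
    Tendsto (fun s => (∫ u in Ioi 0, exp (-u) * f (s / u)) / f s) atTop
      (𝓝 (Gamma (1 - θ))) := by
  obtain ⟨γ, hθγ, hγ1⟩ := exists_between (max_lt hθ one_pos)
  have hbound := hf.eventually_potter_bound hf_mono hf₀ ((le_max_left θ 0).trans_lt hθγ)
    ((le_max_right θ 0).trans hθγ.le)
  have hint : IntegrableOn (fun u => exp (-u) * (2 ^ γ * u ^ (-γ) + 1)) (Ioi 0) := by
    have h₁ : IntegrableOn (fun u => exp (-u) * u ^ (1 - γ - 1)) (Ioi 0) :=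
      GammaIntegral_convergent (by linarith)
    have h₂ : IntegrableOn (fun u => exp (-u)) (Ioi 0) := by
      simpa using exp_neg_integrableOn_Ioi 0 one_pos
    have h₃ : IntegrableOn (fun u => 2 ^ γ * (exp (-u) * u ^ (1 - γ - 1)) + exp (-u)) (Ioi 0) :=
      (h₁.const_mul _).add h₂
    refine h₃.congr_fun (fun u _ => ?_) measurableSet_Ioi
    ring_nf
  have hlim := tendsto_integral_filter_of_dominated_convergence
    (l := atTop) (F := fun s u => exp (-u) * (f (s / u) / f s)) (μ := volume.restrict (Ioi 0))
    (f := fun u => exp (-u) * u ^ (1 - θ - 1)) _ ?_ ?_ hint ?_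
  · rw [Gamma_eq_integral (by linarith)]
    refine hlim.congr fun s => ?_
    simp only [← integral_div, mul_div_assoc]
  · refine Eventually.of_forall fun s => Measurable.aestronglyMeasurable ?_
    exact (continuous_exp.comp continuous_neg).measurable.mul
      ((hf_mono.measurable.comp (measurable_const.div measurable_id)).div_const _)
  · filter_upwards [hbound] with s hs
    filter_upwards [ae_restrict_mem measurableSet_Ioi] with u hu
    rw [norm_of_nonneg (mul_nonneg (exp_pos _).le (div_nonneg (hf₀ _) (hf₀ _)))]
    exact mul_le_mul_of_nonneg_left (hs u hu) (exp_pos _).le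
  · filter_upwards [ae_restrict_mem measurableSet_Ioi] with u hu
    have hu' : (1 / u) ^ θ = u ^ (1 - θ - 1) := by
      rw [one_div, inv_rpow hu.le, ← rpow_neg hu.le]
      ring_nf
    simpa only [one_div_mul_eq_div, hu'] using
      (hf (1 / u) (one_div_pos.2 hu)).const_mul (exp (-u))

end IsRegularlyVarying

noncomputable def countingFn (p : ℕ → ℝ) (x : ℝ) : ℝ :=
  ({i : ℕ | p i ≥ 1 / x}.ncard : ℝ)

section Counting

variable {p : ℕ → ℝ}

theorem Summable.finite_setOf_le (hsum : Summable p) {c : ℝ} (hc : 0 < c) :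
    {i | c ≤ p i}.Finite := by
  simpa using hsum.tendsto_cofinite_zero.eventually (gt_mem_nhds hc)

theorem countingFn_nonneg (p : ℕ → ℝ) : 0 ≤ countingFn p := fun _ => Nat.cast_nonneg _

theorem monotone_countingFn (hp : 0 ≤ p) (hsum : Summable p) : Monotone (countingFn p) := by
  intro x y hxy
  rcases le_or_gt x 0 with hx | hx
  · -- every index qualifies, and `ncard` of an infinite set is `0`
    have huniv : {i : ℕ | p i ≥ 1 / x} = univ :=
      eq_univ_of_forall fun i => (one_div_nonpos.2 hx).trans (hp i)
    simp only [countingFn, huniv, ncard_univ, Nat.card_eq_zero_of_infinite, Nat.cast_zero]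
    exact countingFn_nonneg p y
  · have hfin := hsum.finite_setOf_le (one_div_pos.2 (hx.trans_le hxy))
    exact Nat.cast_le.2
      (ncard_le_ncard (fun i hi => (one_div_le_one_div_of_le hx hxy).trans hi) hfin)

theorem tsum_one_sub_exp_neg_eq_lintegral {a : ℕ → ℝ} (ha : 0 ≤ a) :
    ∑' k, ENNReal.ofReal (1 - exp (-a k)) =
      ∫⁻ t in Ioi 0, Measure.count {k | t ≤ a k} * ENNReal.ofReal (exp (-t)) := by
  have h := lintegral_comp_eq_lintegral_meas_le_mul Measure.count (Eventually.of_forall ha)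
    (measurable_of_countable a).aemeasurable
    (fun t _ => (continuous_exp.comp continuous_neg).intervalIntegrable 0 t)
    (Eventually.of_forall fun t => (exp_pos (-t)).le)
  simpa [lintegral_count] using h

theorem summable_one_sub_exp_neg_mul (hp : 0 ≤ p) (hsum : Summable p) {s : ℝ} (hs : 0 ≤ s) :
    Summable fun k => 1 - exp (-(p k * s)) :=
  (hsum.mul_right s).of_nonneg_of_le
    (fun k => sub_nonneg.2 (exp_le_one_iff.2 (neg_nonpos.2 (mul_nonneg (hp k) hs))))
    (fun k => by linarith [one_sub_le_exp_neg (p k * s)])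

theorem count_le_mul_eq_countingFn (hsum : Summable p) {s u : ℝ} (hs : 0 < s) (hu : 0 < u) :
    Measure.count {k | u ≤ p k * s} = ENNReal.ofReal (countingFn p (s / u)) := by
  have hset : {k | u ≤ p k * s} = {i : ℕ | p i ≥ 1 / (s / u)} := by
    ext k
    simp [div_le_iff₀ hs]
  have hfin : {k | u ≤ p k * s}.Finite := by
    rw [hset]
    exact hsum.finite_setOf_le (by positivity)
  rw [Measure.count_apply_finite _ hfin, countingFn, ← hset, ncard_eq_toFinset_card _ hfin,
    ENNReal.ofReal_natCast]

theorem tsum_one_sub_exp_neg_mul_eq_integral (hp : 0 ≤ p) (hsum : Summable p) {s : ℝ}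
    (hs : 0 < s) :
    ∑' k, (1 - exp (-(p k * s))) = ∫ u in Ioi 0, exp (-u) * countingFn p (s / u) := by
  have hnn : ∀ k, 0 ≤ 1 - exp (-(p k * s)) := fun k =>
    sub_nonneg.2 (exp_le_one_iff.2 (neg_nonpos.2 (mul_nonneg (hp k) hs.le)))
  have hmeas : Measurable fun u => exp (-u) * countingFn p (s / u) :=
    (continuous_exp.comp continuous_neg).measurable.mul
      ((monotone_countingFn hp hsum).measurable.comp (measurable_const.div measurable_id))
  rw [← ENNReal.toReal_ofReal (tsum_nonneg hnn),
    ENNReal.ofReal_tsum_of_nonneg hnn (summable_one_sub_exp_neg_mul hp hsum hs.le),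
    tsum_one_sub_exp_neg_eq_lintegral (a := fun k => p k * s) fun k => mul_nonneg (hp k) hs.le,
    integral_eq_lintegral_of_nonneg_ae
      (Eventually.of_forall fun u => mul_nonneg (exp_pos _).le (countingFn_nonneg p _))
      hmeas.aestronglyMeasurable]
  congr 1
  refine setLIntegral_congr_fun measurableSet_Ioi fun u hu => ?_
  rw [count_le_mul_eq_countingFn hsum hs hu, ← ENNReal.ofReal_mul (countingFn_nonneg p _),
    mul_comm]

variable {θ : ℝ}

theorem tendsto_tsum_one_sub_exp_neg_mul_div_countingFn (hp : 0 ≤ p)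
    (hsum : Summable p) (hreg : IsRegularlyVarying (countingFn p) θ) (hθ : θ < 1) :
    Tendsto (fun s => (∑' k, (1 - exp (-(p k * s)))) / countingFn p s) atTop
      (𝓝 (Gamma (1 - θ))) := by
  refine (hreg.tendsto_integral_exp_neg_mul_div (monotone_countingFn hp hsum)
    (countingFn_nonneg p) hθ).congr' ?_
  filter_upwards [eventually_gt_atTop 0] with s hs
  rw [tsum_one_sub_exp_neg_mul_eq_integral hp hsum hs]

theorem tendsto_tsum_exp_neg_sub_exp_neg_div_countingFn (hp : 0 ≤ p)
    (hsum : Summable p) (hreg : IsRegularlyVarying (countingFn p) θ) (hθ : θ < 1) {a b : ℝ}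
    (ha : 0 < a) (hb : 0 < b) :
    Tendsto (fun n : ℕ => 1 / countingFn p n *
        (1 / 2 * ∑' k, (exp (-(p k * n * a)) - exp (-(p k * n * b))))) atTop
      (𝓝 (Gamma (1 - θ) * (b ^ θ - a ^ θ) / 2)) := by
  have hlim := tendsto_tsum_one_sub_exp_neg_mul_div_countingFn hp hsum hreg hθ
  have h := (((hreg.tendsto_comp_mul_div hlim hb).sub
    (hreg.tendsto_comp_mul_div hlim ha)).const_mul (1 / 2)).comp tendsto_natCast_atTop_atTop
  rw [show Gamma (1 - θ) * (b ^ θ - a ^ θ) / 2 =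
      1 / 2 * (Gamma (1 - θ) * b ^ θ - Gamma (1 - θ) * a ^ θ) by ring]
  refine h.congr fun n => ?_
  have hsummable {c : ℝ} (hc : 0 < c) : Summable fun k => 1 - exp (-(p k * (c * n))) :=
    summable_one_sub_exp_neg_mul hp hsum (by positivity)
  simp only [Function.comp_apply]
  rw [← sub_div, ← (hsummable hb).tsum_sub (hsummable ha)]
  have hterm (k : ℕ) : 1 - exp (-(p k * (b * n))) - (1 - exp (-(p k * (a * n)))) =
      exp (-(p k * n * a)) - exp (-(p k * n * b)) := by ring_nf
  rw [tsum_congr hterm]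
  ring

end Counting

theorem limit_covariance_occupancy_odd_occupancy_general
    (p : ℕ → ℝ) (hp_pos : ∀ k, 0 < p k)
    (hp_sum : ∑' k, p k = 1)
    (θ : ℝ) (hθ : θ ∈ Set.Ioo (0 : ℝ) 1)
    (L : ℝ → ℝ)
    (hL : ∀ c > (0 : ℝ), Tendsto (fun x => L (c * x) / L x) atTop (𝓝 1))
    (hα : ∀ x > (0 : ℝ), ((Set.ncard {i : ℕ | p i ≥ 1 / x} : ℝ)) = x ^ θ * L x)
    (τ t : ℝ) (hτ : 0 < τ) (hτt : τ ≤ t) :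
    Tendsto (fun n : ℕ =>
        (1 / ((Set.ncard {i : ℕ | p i ≥ 1 / (n : ℝ)} : ℝ))) * ((1 / 2) *
          ∑' k, (Real.exp (-(p k * (n : ℝ) * (2 * t - τ)))
            - Real.exp (-(p k * (n : ℝ) * (2 * t + τ))))))
      atTop
      (𝓝 (Real.Gamma (1 - θ) * ((2 * t + τ) ^ θ - (2 * t - τ) ^ θ) / 2)) ∧
    Tendsto (fun n : ℕ =>
        (1 / ((Set.ncard {i : ℕ | p i ≥ 1 / (n : ℝ)} : ℝ))) * ((1 / 2) *
          ∑' k, (Real.exp (-(p k * (n : ℝ) * t))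
            - Real.exp (-(p k * (n : ℝ) * (t + 2 * τ))))))
      atTop
      (𝓝 (Real.Gamma (1 - θ) * ((t + 2 * τ) ^ θ - t ^ θ) / 2)) := by
  have hp : 0 ≤ p := fun k => (hp_pos k).le
  have hsum : Summable p := by
    by_contra h
    simp [tsum_eq_zero_of_not_summable h] at hp_sum
  have hreg : IsRegularlyVarying (countingFn p) θ := IsRegularlyVarying.of_eq_rpow_mul hL hα
  exact ⟨tendsto_tsum_exp_neg_sub_exp_neg_div_countingFn hp hsum hreg hθ.2
      (by linarith) (by linarith),
    tendsto_tsum_exp_neg_sub_exp_neg_div_countingFn hp hsum hreg hθ.2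
      (by linarith) (by linarith)⟩

/-- Limit cross-covariances of the occupancy and odd-occupancy processes, `θ ∈ (0,1)`:
for `0 < τ ≤ t`,
`(1/α(n)) (1/2) ∑_k (e^{−p_k n(2t−τ)} − e^{−p_k n(2t+τ)}) → Γ(1−θ)((2t+τ)^θ−(2t−τ)^θ)/2`
and
`(1/α(n)) (1/2) ∑_k (e^{−p_k n t} − e^{−p_k n(t+2τ)}) → Γ(1−θ)((t+2τ)^θ−t^θ)/2`. -/
theorem limit_covariance_occupancy_odd_occupancy
    (p : ℕ → ℝ) (hp_pos : ∀ k, 0 < p k) (hp_mono : Antitone p)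
    (hp_sum : ∑' k, p k = 1)
    (θ : ℝ) (hθ : θ ∈ Set.Ioo (0 : ℝ) 1)
    (L : ℝ → ℝ)
    (hL : ∀ c > (0 : ℝ), Tendsto (fun x => L (c * x) / L x) atTop (𝓝 1))
    (hα : ∀ x > (0 : ℝ), ((Set.ncard {i : ℕ | p i ≥ 1 / x} : ℝ)) = x ^ θ * L x)
    (τ t : ℝ) (hτ : 0 < τ) (hτt : τ ≤ t) :
    Tendsto (fun n : ℕ =>
        (1 / ((Set.ncard {i : ℕ | p i ≥ 1 / (n : ℝ)} : ℝ))) * ((1 / 2) *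
          ∑' k, (Real.exp (-(p k * (n : ℝ) * (2 * t - τ)))
            - Real.exp (-(p k * (n : ℝ) * (2 * t + τ))))))
      atTop
      (𝓝 (Real.Gamma (1 - θ) * ((2 * t + τ) ^ θ - (2 * t - τ) ^ θ) / 2)) ∧
    Tendsto (fun n : ℕ =>
        (1 / ((Set.ncard {i : ℕ | p i ≥ 1 / (n : ℝ)} : ℝ))) * ((1 / 2) *
          ∑' k, (Real.exp (-(p k * (n : ℝ) * t))
            - Real.exp (-(p k * (n : ℝ) * (t + 2 * τ))))))
      atTop
      (𝓝 (Real.Gamma (1 - θ) * ((t + 2 * τ) ^ θ - t ^ θ) / 2)) :=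
  limit_covariance_occupancy_odd_occupancy_general p hp_pos hp_sum θ hθ L hL hα τ t hτ hτt
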